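/- Let n ≥ 1, T > 0, α ∈ (0,1], and K, R > 0. Let S be the set of all functions x : [0, T] → ℝⁿ for which there exist x₀ ∈ ℝⁿ with ‖x₀‖ ≤ R and a continuous g : [0, T] → ℝⁿ with ‖g(s)‖ ≤ K for all s, such that x(t) = x₀ + (1/Γ(α)) ∫₀ᵗ (t-s)^{α-1} g(s) ds for all t ∈ [0, T]. Then S is a relatively compact subset of the space C([0, T], ℝⁿ) of continuous functions with the supremum norm. -/

import Mathlib

/-!
Every `x` in the set is bounded by `R + K T ^ α / Γ(α + 1)` and is Hölder of exponent `α` with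
constant `2K / Γ(α + 1)`. For the latter, write `I(t) = ∫₀ᵗ (t - s) ^ (α - 1) g(s) ds` and split
`I(t₂) - I(t₁)` into the integral over `(t₁, t₂]` of the kernel at `t₂` and the integral over
`(0, t₁]` of the difference of the kernels at `t₁` and `t₂`; since `α ≤ 1` this difference has a
sign, so both pieces are bounded by explicit integrals of powers, each at most
`K (t₂ - t₁) ^ α / α`. A uniformly Hölder family is equicontinuous, and Arzelà–Ascoli concludes.
-/

open MeasureTheory Set Real
open scoped NNReal

theorem HolderWith.of_dist_le {X Y : Type*} [PseudoMetricSpace X] [PseudoMetricSpace Y]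
    {C r : ℝ≥0} {f : X → Y} (h : ∀ x y, dist (f x) (f y) ≤ C * dist x y ^ (r : ℝ)) :
    HolderWith C r f := by
  intro x y
  rw [edist_nndist, edist_nndist, ← ENNReal.coe_rpow_of_nonneg _ r.coe_nonneg, ← ENNReal.coe_mul,
    ENNReal.coe_le_coe, ← NNReal.coe_le_coe]
  exact_mod_cast h x y

theorem HolderWith.uniformEquicontinuous {ι X Y : Type*} [PseudoEMetricSpace X]
    [PseudoEMetricSpace Y] {C r : ℝ≥0} (hr : 0 < r) {F : ι → X → Y}
    (hF : ∀ i, HolderWith C r (F i)) : UniformEquicontinuous F := by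
  rw [uniformEquicontinuous_iff_uniformContinuous]
  exact HolderWith.uniformContinuous (fun x y => UniformFun.edist_le.2 fun i => hF i x y) hr

theorem ContinuousMap.isCompact_closure_of_equicontinuous {X Y : Type*} [TopologicalSpace X]
    [CompactSpace X] [MetricSpace Y] {s : Set Y} (hs : IsCompact s) {A : Set C(X, Y)}
    (hA : ∀ f ∈ A, ∀ x, f x ∈ s) (hAeq : Equicontinuous ((↑) : A → X → Y)) :
    IsCompact (closure A) := by
  let e := ContinuousMap.isometryEquivBoundedOfCompact X Y
  have hcomp : IsCompact (closure (e '' A)) := by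
    refine BoundedContinuousFunction.arzela_ascoli s hs _ ?_ ?_
    · rintro _ x ⟨f, hf, rfl⟩
      exact hA f hf x
    · exact fun x₀ U hU => (hAeq x₀ U hU).mono fun x hx ⟨_, f, hf, rfl⟩ => hx ⟨f, hf⟩
  have := hcomp.image e.symm.continuous
  rw [← e.symm.coe_toHomeomorph, Homeomorph.image_closure, e.symm.coe_toHomeomorph,
    image_image] at this
  simpa only [e.symm_apply_apply, image_id'] using this

theorem integrableOn_sub_rpow_Ioc {α : ℝ} (hα : 0 < α) (a b c : ℝ) :
    IntegrableOn (fun s => (c - s) ^ (α - 1)) (Ioc a b) := by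
  have h := (intervalIntegral.intervalIntegrable_rpow' (a := c - b) (b := c - a)
    (r := α - 1) (by linarith)).comp_sub_left c
  simp only [sub_sub_cancel] at h
  exact h.symm.1

theorem integral_sub_rpow_Ioc {α a b : ℝ} (hα : 0 < α) (hab : a ≤ b) (c : ℝ) :
    ∫ s in Ioc a b, (c - s) ^ (α - 1) = ((c - a) ^ α - (c - b) ^ α) / α := by
  rw [← intervalIntegral.integral_of_le hab,
    intervalIntegral.integral_comp_sub_left (fun x => x ^ (α - 1)) c,
    integral_rpow (Or.inl (by linarith)), sub_add_cancel]

theorem norm_integral_smul_le_of_norm_le {X E : Type*} [MeasurableSpace X] [NormedAddCommGroup E]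
    [NormedSpace ℝ E] {μ : Measure X} {w : X → ℝ} {g : X → E} {K : ℝ} (hw : Integrable w μ)
    (hw0 : 0 ≤ᵐ[μ] w) (hg : ∀ᵐ x ∂μ, ‖g x‖ ≤ K) :
    ‖∫ x, w x • g x ∂μ‖ ≤ K * ∫ x, w x ∂μ := by
  rw [← integral_const_mul]
  refine norm_integral_le_of_norm_le (hw.const_mul K) ?_
  filter_upwards [hw0, hg] with x hwx hgx
  rw [norm_smul, Real.norm_of_nonneg hwx, mul_comm]
  exact mul_le_mul_of_nonneg_right hgx hwx

section RiemannLiouville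

variable {E : Type*} [NormedAddCommGroup E] [NormedSpace ℝ E] {α K T : ℝ} {g : ℝ → E}

noncomputable def riemannLiouvilleIntegral (α : ℝ) (g : ℝ → E) (t : ℝ) : E :=
  (Gamma α)⁻¹ • ∫ s in Ioc 0 t, (t - s) ^ (α - 1) • g s

theorem integrableOn_sub_rpow_smul (hα : 0 < α)
    (hg : AEStronglyMeasurable g (volume.restrict (Ioc 0 T))) (hgK : ∀ s ∈ Ioc 0 T, ‖g s‖ ≤ K)
    {a b : ℝ} (ha : 0 ≤ a) (hb : b ≤ T) (c : ℝ) :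
    IntegrableOn (fun s => (c - s) ^ (α - 1) • g s) (Ioc a b) := by
  have hsub : Ioc a b ⊆ Ioc 0 T := Ioc_subset_Ioc ha hb
  exact (integrableOn_sub_rpow_Ioc hα a b c).smul_bdd K (hg.mono_set hsub)
    ((ae_restrict_mem measurableSet_Ioc).mono fun s hs => hgK s (hsub hs))

theorem norm_integral_sub_rpow_smul_le (hα : 0 < α) {a b : ℝ} (hab : a ≤ b)
    (hgK : ∀ s ∈ Ioc a b, ‖g s‖ ≤ K) :
    ‖∫ s in Ioc a b, (b - s) ^ (α - 1) • g s‖ ≤ K * ((b - a) ^ α / α) := by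
  have hweight := integral_sub_rpow_Ioc hα hab b
  rw [sub_self, zero_rpow hα.ne', sub_zero] at hweight
  rw [← hweight]
  refine norm_integral_smul_le_of_norm_le (integrableOn_sub_rpow_Ioc hα a b b) ?_
    ((ae_restrict_mem measurableSet_Ioc).mono hgK)
  filter_upwards [ae_restrict_mem measurableSet_Ioc] with s hs
  exact rpow_nonneg (sub_nonneg.2 hs.2) _

theorem norm_integral_rpow_sub_rpow_smul_le (hα : α ∈ Ioc 0 1) {t₁ t₂ : ℝ} (ht₁ : 0 ≤ t₁)
    (ht : t₁ ≤ t₂) (hgK : ∀ s ∈ Ioc 0 t₁, ‖g s‖ ≤ K) :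
    ‖∫ s in Ioc 0 t₁, ((t₁ - s) ^ (α - 1) - (t₂ - s) ^ (α - 1)) • g s‖
      ≤ K * ((t₁ ^ α - t₂ ^ α + (t₂ - t₁) ^ α) / α) := by
  have hmass : ∫ s in Ioc 0 t₁, ((t₁ - s) ^ (α - 1) - (t₂ - s) ^ (α - 1))
      = (t₁ ^ α - t₂ ^ α + (t₂ - t₁) ^ α) / α := by
    rw [integral_sub (integrableOn_sub_rpow_Ioc hα.1 _ _ _) (integrableOn_sub_rpow_Ioc hα.1 _ _ _),
      integral_sub_rpow_Ioc hα.1 ht₁, integral_sub_rpow_Ioc hα.1 ht₁, sub_self,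
      zero_rpow hα.1.ne']
    ring_nf
  rw [← hmass]
  refine norm_integral_smul_le_of_norm_le
    ((integrableOn_sub_rpow_Ioc hα.1 _ _ _).sub (integrableOn_sub_rpow_Ioc hα.1 _ _ _)) ?_
    ((ae_restrict_mem measurableSet_Ioc).mono hgK)
  -- the weight is negative at `s = t₁` when `α < 1`, since there `0 ^ (α - 1) = 0`
  rw [← Measure.restrict_congr_set Ioo_ae_eq_Ioc]
  filter_upwards [ae_restrict_mem measurableSet_Ioo] with s hs
  exact sub_nonneg.2
    (rpow_le_rpow_of_nonpos (by linarith [hs.2]) (by linarith) (by linarith [hα.2]))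

theorem norm_integral_sub_rpow_smul_sub_integral_le (hα : α ∈ Ioc 0 1) (hK : 0 ≤ K)
    (hg : AEStronglyMeasurable g (volume.restrict (Ioc 0 T))) (hgK : ∀ s ∈ Ioc 0 T, ‖g s‖ ≤ K)
    {t₁ t₂ : ℝ} (ht₁ : 0 ≤ t₁) (ht : t₁ ≤ t₂) (ht₂ : t₂ ≤ T) :
    ‖(∫ s in Ioc 0 t₂, (t₂ - s) ^ (α - 1) • g s) - ∫ s in Ioc 0 t₁, (t₁ - s) ^ (α - 1) • g s‖
      ≤ 2 * K * (t₂ - t₁) ^ α / α := by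
  have hsplit : (∫ s in Ioc 0 t₂, (t₂ - s) ^ (α - 1) • g s)
        - ∫ s in Ioc 0 t₁, (t₁ - s) ^ (α - 1) • g s
      = (∫ s in Ioc t₁ t₂, (t₂ - s) ^ (α - 1) • g s)
        - ∫ s in Ioc 0 t₁, ((t₁ - s) ^ (α - 1) - (t₂ - s) ^ (α - 1)) • g s := by
    have h₀₁ := integrableOn_sub_rpow_smul hα.1 hg hgK le_rfl (ht.trans ht₂) t₂
    rw [← Ioc_union_Ioc_eq_Ioc ht₁ ht, setIntegral_union (Ioc_disjoint_Ioc_of_le le_rfl)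
      measurableSet_Ioc h₀₁ (integrableOn_sub_rpow_smul hα.1 hg hgK ht₁ ht₂ t₂)]
    simp_rw [sub_smul]
    rw [integral_sub (integrableOn_sub_rpow_smul hα.1 hg hgK le_rfl (ht.trans ht₂) t₁) h₀₁]
    abel
  have hnear := norm_integral_sub_rpow_smul_le hα.1 ht
    fun s hs => hgK s (Ioc_subset_Ioc ht₁ ht₂ hs)
  have hfar := norm_integral_rpow_sub_rpow_smul_le hα ht₁ ht
    fun s hs => hgK s (Ioc_subset_Ioc_right (ht.trans ht₂) hs)
  have hmono : t₁ ^ α ≤ t₂ ^ α := rpow_le_rpow ht₁ ht hα.1.le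
  calc _ ≤ K * ((t₂ - t₁) ^ α / α) + K * ((t₁ ^ α - t₂ ^ α + (t₂ - t₁) ^ α) / α) := by
        rw [hsplit]
        exact (norm_sub_le _ _).trans (add_le_add hnear hfar)
    _ ≤ K * ((t₂ - t₁) ^ α / α) + K * ((t₂ - t₁) ^ α / α) := by
        gcongr <;> linarith [hα.1]
    _ = 2 * K * (t₂ - t₁) ^ α / α := by ring

theorem norm_riemannLiouvilleIntegral_le (hα : 0 < α) {t : ℝ} (ht : 0 ≤ t)
    (hgK : ∀ s ∈ Ioc 0 t, ‖g s‖ ≤ K) :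
    ‖riemannLiouvilleIntegral α g t‖ ≤ K * t ^ α / Gamma (α + 1) := by
  have hΓ := Gamma_pos_of_pos hα
  have hI := norm_integral_sub_rpow_smul_le hα ht hgK
  rw [sub_zero] at hI
  rw [riemannLiouvilleIntegral, norm_smul, norm_inv, Real.norm_of_nonneg hΓ.le,
    Gamma_add_one hα.ne']
  calc _ ≤ (Gamma α)⁻¹ * (K * (t ^ α / α)) := by gcongr
    _ = K * t ^ α / (α * Gamma α) := by field_simp

theorem dist_riemannLiouvilleIntegral_le (hα : α ∈ Ioc 0 1) (hK : 0 ≤ K)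
    (hg : AEStronglyMeasurable g (volume.restrict (Ioc 0 T))) (hgK : ∀ s ∈ Ioc 0 T, ‖g s‖ ≤ K)
    {t u : ℝ} (ht : t ∈ Icc 0 T) (hu : u ∈ Icc 0 T) :
    dist (riemannLiouvilleIntegral α g t) (riemannLiouvilleIntegral α g u)
      ≤ 2 * K / Gamma (α + 1) * dist t u ^ α := by
  wlog hut : u ≤ t generalizing t u
  · rw [dist_comm, dist_comm t]
    exact this hu ht (le_of_not_ge hut)
  have hΓ := Gamma_pos_of_pos hα.1
  rw [dist_eq_norm, riemannLiouvilleIntegral, riemannLiouvilleIntegral, ← smul_sub, norm_smul,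
    norm_inv, Real.norm_of_nonneg hΓ.le, Real.dist_eq, abs_of_nonneg (sub_nonneg.2 hut),
    Gamma_add_one hα.1.ne']
  calc _ ≤ (Gamma α)⁻¹ * (2 * K * (t - u) ^ α / α) := by
        gcongr
        exact norm_integral_sub_rpow_smul_sub_integral_le hα hK hg hgK hu.1 hut ht.2
    _ = 2 * K / (α * Gamma α) * (t - u) ^ α := by field_simp

end RiemannLiouville

theorem fractional_integral_set_relatively_compact_general
    (n : ℕ) (T α K R : ℝ)
    (hα : α ∈ Set.Ioc (0:ℝ) 1) (hK : 0 < K) :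
    IsCompact (closure
      {x : C(Set.Icc (0:ℝ) T, EuclideanSpace ℝ (Fin n)) |
        ∃ x₀ : EuclideanSpace ℝ (Fin n), ‖x₀‖ ≤ R ∧
        ∃ g : ℝ → EuclideanSpace ℝ (Fin n),
          ContinuousOn g (Set.Icc (0:ℝ) T) ∧
          (∀ s ∈ Set.Icc (0:ℝ) T, ‖g s‖ ≤ K) ∧
          ∀ t : Set.Icc (0:ℝ) T, x t =
            x₀ + (Real.Gamma α)⁻¹ •
              ∫ s in Set.Ioc (0:ℝ) (t : ℝ), (((t : ℝ) - s) ^ (α - 1)) • g s}) := by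
  have hα0 : 0 < α := hα.1
  refine ContinuousMap.isCompact_closure_of_equicontinuous
    (isCompact_closedBall (0 : EuclideanSpace ℝ (Fin n)) (R + K * T ^ α / Gamma (α + 1)))
    ?_ ?_
  · rintro x ⟨x₀, hx₀, g, -, hgK, hx⟩ t
    have hRL := norm_riemannLiouvilleIntegral_le hα0 t.2.1
      fun s hs => hgK s (Ioc_subset_Icc_self.trans (Icc_subset_Icc_right t.2.2) hs)
    rw [mem_closedBall_zero_iff, hx t]
    refine (norm_add_le _ _).trans (add_le_add hx₀ (hRL.trans ?_))
    gcongr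
    exacts [t.2.1, t.2.2]
  · refine (HolderWith.uniformEquicontinuous (C := ⟨2 * K / Gamma (α + 1), by positivity⟩)
      (r := ⟨α, hα0.le⟩) hα0 fun ⟨x, hx⟩ => ?_).equicontinuous
    obtain ⟨x₀, -, g, hg, hgK, hx⟩ := hx
    refine HolderWith.of_dist_le fun t u => ?_
    rw [hx t, hx u, dist_add_left]
    exact dist_riemannLiouvilleIntegral_le hα hK.le
      ((hg.mono Ioc_subset_Icc_self).aestronglyMeasurable measurableSet_Ioc)
      (fun s hs => hgK s (Ioc_subset_Icc_self hs)) t.2 u.2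

/-- **Relative compactness of fractional-integral orbits (Arzelà–Ascoli).**
The set of functions `x(t) = x₀ + (1/Γ(α)) ∫₀ᵗ (t-s)^(α-1) g(s) ds` on `[0,T]`,
with `‖x₀‖ ≤ R` and `g` continuous with `‖g‖ ≤ K`, is relatively compact in
`C([0,T], ℝⁿ)` with the supremum norm. -/
theorem fractional_integral_set_relatively_compact
    (n : ℕ) (hn : 1 ≤ n) (T α K R : ℝ) (hT : 0 < T)
    (hα : α ∈ Set.Ioc (0:ℝ) 1) (hK : 0 < K) (hR : 0 < R) :
    IsCompact (closure
      {x : C(Set.Icc (0:ℝ) T, EuclideanSpace ℝ (Fin n)) |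
        ∃ x₀ : EuclideanSpace ℝ (Fin n), ‖x₀‖ ≤ R ∧
        ∃ g : ℝ → EuclideanSpace ℝ (Fin n),
          ContinuousOn g (Set.Icc (0:ℝ) T) ∧
          (∀ s ∈ Set.Icc (0:ℝ) T, ‖g s‖ ≤ K) ∧
          ∀ t : Set.Icc (0:ℝ) T, x t =
            x₀ + (Real.Gamma α)⁻¹ •
              ∫ s in Set.Ioc (0:ℝ) (t : ℝ), (((t : ℝ) - s) ^ (α - 1)) • g s}) :=
  fractional_integral_set_relatively_compact_general n T α K R hα hK
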